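/- arXiv:2310.06739 — 3 statements merged into one kernel-verified Lean document; each statement's English description precedes it below -/
import Mathlib

section
/- Under conditions (P1)–(P3), for every n > 0 there exists a constant Θ_n > 0 such that for every w ∈ Ω₁* with ‖w‖_{Ω₁*} ≤ n and every u ∈ SOL(K, w + G(·), φ) one has ‖u‖_{Ω₁} ≤ Θ_n. -/
open MeasureTheory Set Filter Topology
open scoped ENNReal

noncomputable section

/-- `SOL K G φ w` is the solution set `SOL(K, w + G(·), φ)` of the generalized mixed
variational inequality: all `u ∈ K` with `⟨w + G(u), v - u⟩ + φ(v) - φ(u) ≥ 0` for all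
`v ∈ K` (written without `EReal` subtraction as `φ(u) ≤ ⟨w + G(u), v - u⟩ + φ(v)`). -/
def SOL {Ω₁ : Type*} [NormedAddCommGroup Ω₁] [NormedSpace ℝ Ω₁]
    (K : Set Ω₁) (G : Ω₁ → (Ω₁ →L[ℝ] ℝ)) (φ : Ω₁ → EReal) (w : Ω₁ →L[ℝ] ℝ) : Set Ω₁ :=
  {u | u ∈ K ∧ ∀ v ∈ K, φ u ≤ ((w (v - u) + (G u) (v - u) : ℝ) : EReal) + φ v}

/-- (P1): `G` is monotone on `K` and hemicontinuous on `K`. -/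
def condP1 {Ω₁ : Type*} [NormedAddCommGroup Ω₁] [NormedSpace ℝ Ω₁]
    (K : Set Ω₁) (G : Ω₁ → (Ω₁ →L[ℝ] ℝ)) : Prop :=
  (∀ u ∈ K, ∀ v ∈ K, 0 ≤ (G v - G u) (v - u)) ∧
  (∀ u ∈ K, ∀ v ∈ K, ∀ x : Ω₁,
    ContinuousOn (fun t : ℝ => (G (u + t • (v - u))) x) (Icc (0:ℝ) 1))

/-- (P2): `φ : Ω₁ → ℝ ∪ {+∞}` (an `EReal`-valued map never taking the value `⊥`) is
proper, convex and lower semicontinuous. -/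
def condP2 {Ω₁ : Type*} [NormedAddCommGroup Ω₁] [NormedSpace ℝ Ω₁] (φ : Ω₁ → EReal) : Prop :=
  (∀ u, φ u ≠ ⊥) ∧ (∃ u, φ u ≠ ⊤) ∧
  (∀ u v : Ω₁, ∀ t : ℝ, t ∈ Icc (0:ℝ) 1 →
    φ (t • u + (1 - t) • v) ≤ (t : EReal) * φ u + ((1 - t : ℝ) : EReal) * φ v) ∧
  LowerSemicontinuous φ

/-- (P3): coercivity: there is `v* ∈ K ∩ D(φ)` with
`(⟨G(u), u - v*⟩ + φ(u) - φ(v*))/‖u‖ → +∞` as `‖u‖ → ∞`, `u ∈ K`. -/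
def condP3 {Ω₁ : Type*} [NormedAddCommGroup Ω₁] [NormedSpace ℝ Ω₁]
    (K : Set Ω₁) (G : Ω₁ → (Ω₁ →L[ℝ] ℝ)) (φ : Ω₁ → EReal) : Prop :=
  ∃ vs ∈ K, φ vs ≠ ⊤ ∧
    ∀ M : ℝ, ∃ R : ℝ, ∀ u ∈ K, R ≤ ‖u‖ →
      ((M * ‖u‖ : ℝ) : EReal) + φ vs ≤ (((G u) (u - vs) : ℝ) : EReal) + φ u

/-- **Theorem 3.3**: under (P1)–(P3), solutions of the variational inequality are
bounded, uniformly over `‖w‖ ≤ n`. -/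
theorem sol_uniformly_bounded
    {Ω₁ : Type*} [NormedAddCommGroup Ω₁] [NormedSpace ℝ Ω₁] [CompleteSpace Ω₁]
    [TopologicalSpace.SeparableSpace Ω₁]
    (hΩ₁refl : Function.Surjective ⇑(NormedSpace.inclusionInDoubleDual ℝ Ω₁))
    (K : Set Ω₁) (hKne : K.Nonempty) (hKcl : IsClosed K) (hKcv : Convex ℝ K)
    (G : Ω₁ → (Ω₁ →L[ℝ] ℝ)) (φ : Ω₁ → EReal)
    (hP1 : condP1 K G) (hP2 : condP2 φ) (hP3 : condP3 K G φ)
    : ∀ n : ℝ, 0 < n → ∃ Θn : ℝ, 0 < Θn ∧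
      ∀ w : Ω₁ →L[ℝ] ℝ, ‖w‖ ≤ n → ∀ u ∈ SOL K G φ w, ‖u‖ ≤ Θn := by
  obtain ⟨vs, hvs, hvsT, hcoer⟩ := hP3
  intro n hn
  obtain ⟨R, hR⟩ := hcoer (n + 1)
  have hnv : 0 ≤ n * ‖vs‖ := by positivity
  refine ⟨max R (n * ‖vs‖) + 1, by
    have := le_max_right R (n * ‖vs‖); linarith, ?_⟩
  intro w hw u hu
  by_cases hR' : R ≤ ‖u‖
  · -- use coercivity
    have hc := hP2.1 vs
    have hφvs : φ vs = ((φ vs).toReal : EReal) := (EReal.coe_toReal hvsT hc).symm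
    have hsol := hu.2 vs hvs
    rw [hφvs, ← EReal.coe_add] at hsol
    have hne : φ u ≠ ⊤ := by
      intro h; rw [h] at hsol; exact (EReal.coe_lt_top _).not_ge hsol
    have hφu : φ u = ((φ u).toReal : EReal) := (EReal.coe_toReal hne (hP2.1 u)).symm
    set a := (φ u).toReal
    set c := (φ vs).toReal
    rw [hφu] at hsol
    have hsol' : a ≤ w (vs - u) + (G u) (vs - u) + c := EReal.coe_le_coe_iff.mp hsol
    have hco := hR u hu.1 hR'
    rw [hφvs, hφu, ← EReal.coe_add, ← EReal.coe_add] at hco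
    have hco' : (n + 1) * ‖u‖ + c ≤ (G u) (u - vs) + a := EReal.coe_le_coe_iff.mp hco
    have hg : (G u) (vs - u) = -((G u) (u - vs)) := by
      rw [show vs - u = -(u - vs) by abel, map_neg]
    have h1 : (n + 1) * ‖u‖ ≤ w (vs - u) := by rw [hg] at hsol'; linarith
    have h2 : w (vs - u) ≤ n * (‖vs‖ + ‖u‖) := by
      calc w (vs - u) ≤ ‖w (vs - u)‖ := le_abs_self _
        _ ≤ ‖w‖ * ‖vs - u‖ := w.le_opNorm _
        _ ≤ n * (‖vs‖ + ‖u‖) := by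
            have h3 : ‖vs - u‖ ≤ ‖vs‖ + ‖u‖ := norm_sub_le _ _
            have := norm_nonneg w
            nlinarith [norm_nonneg (vs - u)]
    have h4 : ‖u‖ ≤ n * ‖vs‖ := by nlinarith
    have := le_max_right R (n * ‖vs‖); linarith
  · have := le_max_left R (n * ‖vs‖); push_neg at hR'; linarith
end
end

section
/- Under conditions (P1)–(P4), the set-valued map U is strongly-weakly upper semicontinuous: for every (ξ₀,θ₀) ∈ [0,T] × Ω₂ and every set O ⊆ Ω₁ that is open in the weak topology of Ω₁ and satisfies U(ξ₀,θ₀) ⊆ O, there exists a neighborhood N of (ξ₀,θ₀) in the norm topology of [0,T] × Ω₂ such that U(ξ,θ) ⊆ O for all (ξ,θ) ∈ N. -/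
open MeasureTheory Set Filter Topology
open scoped ENNReal

noncomputable section

/-- (P4): `g` is continuous and bounded on `[0,T] × Ω₂`. -/
def condP4 {Ω₁ Ω₂ : Type*} [NormedAddCommGroup Ω₁] [NormedSpace ℝ Ω₁]
    [NormedAddCommGroup Ω₂] [NormedSpace ℝ Ω₂]
    (T : ℝ) (g : ℝ → Ω₂ → (Ω₁ →L[ℝ] ℝ)) : Prop :=
  ContinuousOn (fun p : ℝ × Ω₂ => g p.1 p.2) (Icc (0:ℝ) T ×ˢ univ) ∧
  ∃ C : ℝ, ∀ ξ ∈ Icc (0:ℝ) T, ∀ θ : Ω₂, ‖g ξ θ‖ ≤ C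

/-- The weak topology of a real normed space `E`: the topology induced by the
canonical map from `E` into `(E →L[ℝ] ℝ) → ℝ` (with the product topology). -/
def weakTop (E : Type*) [NormedAddCommGroup E] [NormedSpace ℝ E] : TopologicalSpace E :=
  TopologicalSpace.induced (fun (x : E) (f : E →L[ℝ] ℝ) => f x) inferInstance

/-! Coercivity keeps the solutions for data `w` in a norm ball inside a fixed norm ball, which is
weakly compact by reflexivity. By monotonicity every solution also solves Minty's inequality, in
which `G` is evaluated at the test point; that inequality cuts out closed convex, hence weakly
closed, sublevel sets, so it passes to weak cluster points of bounded solutions as `w` converges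
in norm. Hemicontinuity and convexity turn a Minty solution back into a solution. Hence
`w ↦ SOL K G φ w` is norm-to-weak upper hemicontinuous, and `U` is its composition with the
continuous `g`. -/

section WeakTopology

variable {E : Type*} [NormedAddCommGroup E] [NormedSpace ℝ E]

theorem Convex.isClosed_toWeakSpace_symm_preimage {s : Set E} (hs : Convex ℝ s)
    (hc : IsClosed s) : IsClosed ((toWeakSpace ℝ E).symm ⁻¹' s) := by
  rw [← (toWeakSpace ℝ E).image_eq_preimage_symm, ← closure_eq_iff_isClosed,
    ← hs.toWeakSpace_closure ℝ, hc.closure_eq]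

theorem isCompact_toWeakSpace_symm_preimage_closedBall
    (hrefl : Function.Surjective (NormedSpace.inclusionInDoubleDual ℝ E)) (r : ℝ) :
    IsCompact ((toWeakSpace ℝ E).symm ⁻¹' Metric.closedBall (0 : E) r) := by
  have hclosed := (convex_closedBall (0 : E) r).isClosed_toWeakSpace_symm_preimage
    Metric.isClosed_closedBall
  rw [← hclosed.closure_eq]
  refine NormedSpace.isCompact_closure_of_isBounded ℝ E _ ?_ ?_
  · exact Metric.isBounded_closedBall
  · rintro φ -
    obtain ⟨x, hx⟩ := hrefl (WeakDual.toStrongDual φ)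
    exact ⟨toWeakSpace ℝ E x, by simp [NormedSpace.inclusionInDoubleDualWeak_apply, hx]⟩

end WeakTopology

section VariationalInequality

variable {E : Type*} [NormedAddCommGroup E] [NormedSpace ℝ E]
  {K : Set E} {G : E → (E →L[ℝ] ℝ)} {φ : E → EReal}

def mintySOL (K : Set E) (G : E → (E →L[ℝ] ℝ)) (φ : E → EReal) (w : E →L[ℝ] ℝ) : Set E :=
  {u | u ∈ K ∧ ∀ v ∈ K, φ u ≤ ((w (v - u) + G v (v - u) : ℝ) : EReal) + φ v}

theorem SOL_subset_mintySOL (hmono : ∀ u ∈ K, ∀ v ∈ K, 0 ≤ (G v - G u) (v - u))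
    (w : E →L[ℝ] ℝ) : SOL K G φ w ⊆ mintySOL K G φ w := by
  rintro u ⟨huK, hu⟩
  refine ⟨huK, fun v hv => (hu v hv).trans (add_le_add_left ?_ _)⟩
  have := hmono u huK v hv
  rw [sub_apply, sub_nonneg] at this
  exact EReal.coe_le_coe_iff.2 (by linarith)

theorem exists_norm_le_of_mem_SOL (hbot : ∀ u, φ u ≠ ⊥) (hP3 : condP3 K G φ) (C : ℝ) :
    ∃ r, ∀ w : E →L[ℝ] ℝ, ‖w‖ ≤ C → ∀ u ∈ SOL K G φ w, ‖u‖ ≤ r := by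
  obtain ⟨vs, hvsK, hvs_top, hcoerc⟩ := hP3
  obtain ⟨R, hR⟩ := hcoerc (C + 1)
  refine ⟨max R (C * ‖vs‖), fun w hw u ⟨huK, hu⟩ => ?_⟩
  rcases lt_or_ge ‖u‖ R with hsmall | hlarge
  · exact hsmall.le.trans (le_max_left _ _)
  have hcoer := hR u huK hlarge
  have hvi := hu vs hvsK
  lift φ vs to ℝ using ⟨hvs_top, hbot vs⟩ with b
  rw [← EReal.coe_add] at hvi
  lift φ u to ℝ using ⟨ne_top_of_le_ne_top (EReal.coe_ne_top _) hvi, hbot u⟩ with a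
  norm_cast at hcoer hvi
  have hw_le : w (vs - u) ≤ C * (‖vs‖ + ‖u‖) :=
    (Real.le_norm_self _).trans (w.le_of_opNorm_le_of_le hw (norm_sub_le _ _))
  have hG : G u (vs - u) = -G u (u - vs) := by rw [← map_neg, neg_sub]
  refine le_trans ?_ (le_max_right _ _)
  linarith

theorem le_apply_segment_of_mem_mintySOL (hKcv : Convex ℝ K) (hbot : ∀ u, φ u ≠ ⊥)
    (hconv : ∀ u v : E, ∀ t : ℝ, t ∈ Icc (0:ℝ) 1 →
      φ (t • u + (1 - t) • v) ≤ (t : EReal) * φ u + ((1 - t : ℝ) : EReal) * φ v)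
    {w : E →L[ℝ] ℝ} {u v : E} {a b : ℝ} (hu : u ∈ mintySOL K G φ w) (hv : v ∈ K)
    (ha : φ u = a) (hb : φ v = b) {t : ℝ} (ht : t ∈ Ioc (0:ℝ) 1) :
    a ≤ w (v - u) + G (u + t • (v - u)) (v - u) + b := by
  set vt := u + t • (v - u)
  have hvt : vt = t • v + (1 - t) • u := by module
  have hφvt : φ vt ≤ ((t * b + (1 - t) * a : ℝ) : EReal) := by
    simpa only [← hvt, ha, hb, ← EReal.coe_mul, ← EReal.coe_add] using
      hconv v u t (Ioc_subset_Icc_self ht)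
  have hminty := hu.2 vt (hKcv.add_smul_sub_mem hu.1 hv (Ioc_subset_Icc_self ht))
  lift φ vt to ℝ using ⟨ne_top_of_le_ne_top (EReal.coe_ne_top _) hφvt, hbot vt⟩ with c
  rw [ha] at hminty
  norm_cast at hminty hφvt
  simp only [vt, add_sub_cancel_left, map_smul, smul_eq_mul] at hminty
  have : t * a ≤ t * (w (v - u) + G vt (v - u) + b) := by linarith
  exact le_of_mul_le_mul_left this ht.1

theorem mintySOL_subset_SOL (hKcv : Convex ℝ K)
    (hhemi : ∀ u ∈ K, ∀ v ∈ K, ∀ x : E,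
      ContinuousOn (fun t : ℝ => (G (u + t • (v - u))) x) (Icc (0:ℝ) 1))
    (hbot : ∀ u, φ u ≠ ⊥)
    (hconv : ∀ u v : E, ∀ t : ℝ, t ∈ Icc (0:ℝ) 1 →
      φ (t • u + (1 - t) • v) ≤ (t : EReal) * φ u + ((1 - t : ℝ) : EReal) * φ v)
    (w : E →L[ℝ] ℝ) : mintySOL K G φ w ⊆ SOL K G φ w := by
  intro u hu
  refine ⟨hu.1, fun v hv => ?_⟩
  by_cases hv_top : φ v = ⊤
  · simp only [hv_top, EReal.coe_add_top, le_top]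
  have hminty := hu.2 v hv
  lift φ v to ℝ using ⟨hv_top, hbot v⟩ with b hb
  rw [← EReal.coe_add] at hminty
  lift φ u to ℝ using ⟨ne_top_of_le_ne_top (EReal.coe_ne_top _) hminty, hbot u⟩ with a ha
  rw [← EReal.coe_add, EReal.coe_le_coe_iff]
  have hG : Tendsto (fun t : ℝ => G (u + t • (v - u)) (v - u)) (𝓝[Ioc 0 1] 0)
      (𝓝 (G u (v - u))) := by
    simpa using ((hhemi u hu.1 v hv (v - u)) 0 (left_mem_Icc.2 zero_le_one)).mono_left
      (nhdsWithin_mono _ Ioc_subset_Icc_self)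
  have := left_nhdsWithin_Ioc_neBot (zero_lt_one' ℝ)
  have hlim : a - w (v - u) - b ≤ G u (v - u) :=
    ge_of_tendsto hG <| eventually_nhdsWithin_of_forall fun t ht => by
      linarith [le_apply_segment_of_mem_mintySOL hKcv hbot hconv hu hv ha.symm hb.symm ht]
  linarith

theorem convex_setOf_le_sub (hbot : ∀ u, φ u ≠ ⊥)
    (hconv : ∀ u v : E, ∀ t : ℝ, t ∈ Icc (0:ℝ) 1 →
      φ (t • u + (1 - t) • v) ≤ (t : EReal) * φ u + ((1 - t : ℝ) : EReal) * φ v)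
    (f : E →L[ℝ] ℝ) (c : ℝ) : Convex ℝ {x | φ x ≤ ((c - f x : ℝ) : EReal)} := by
  intro x hx y hy s t hs ht hst
  obtain rfl : t = 1 - s := by linarith
  have h := hconv x y s ⟨hs, by linarith⟩
  simp only [mem_ofPred_eq] at hx hy ⊢
  lift φ x to ℝ using ⟨ne_top_of_le_ne_top (EReal.coe_ne_top _) hx, hbot x⟩ with p
  lift φ y to ℝ using ⟨ne_top_of_le_ne_top (EReal.coe_ne_top _) hy, hbot y⟩ with q
  norm_cast at hx hy h
  refine h.trans (EReal.coe_le_coe_iff.2 ?_)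
  simp only [map_add, map_smul, smul_eq_mul]
  nlinarith

theorem mem_mintySOL_of_tendsto {ι : Type*} {l : Filter ι} (hKcv : Convex ℝ K)
    (hKcl : IsClosed K) (hbot : ∀ u, φ u ≠ ⊥)
    (hconv : ∀ u v : E, ∀ t : ℝ, t ∈ Icc (0:ℝ) 1 →
      φ (t • u + (1 - t) • v) ≤ (t : EReal) * φ u + ((1 - t : ℝ) : EReal) * φ v)
    (hlsc : LowerSemicontinuous φ) {w : ι → E →L[ℝ] ℝ} {w₀ : E →L[ℝ] ℝ}
    (hw : Tendsto w l (𝓝 w₀)) {u : ι → E} {r : ℝ}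
    (hu : ∀ᶠ i in l, u i ∈ mintySOL K G φ (w i)) (hr : ∀ᶠ i in l, ‖u i‖ ≤ r) {x : E}
    -- satisfied by weak cluster points of `u`, since closed convex sets are weakly closed
    (hx : ∀ s : Set E, Convex ℝ s → IsClosed s → (∀ᶠ i in l, u i ∈ s) → x ∈ s) :
    x ∈ mintySOL K G φ w₀ := by
  refine ⟨hx K hKcv hKcl (hu.mono fun i hi => hi.1), fun v hv => ?_⟩
  by_cases hv_top : φ v = ⊤
  · simp only [hv_top, EReal.coe_add_top, le_top]
  lift φ v to ℝ using ⟨hv_top, hbot v⟩ with b hb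
  rw [← EReal.coe_add, ← EReal.le_of_forall_lt_iff_le]
  intro z hz
  rw [EReal.coe_lt_coe_iff] at hz
  set f := w₀ + G v
  -- The affine bound `z + f x - f y` equals `z` at `x` and, for `i` large, dominates the Minty
  -- bound at `u i`, the error `(w i - w₀) (v - u i)` being uniformly small on the norm ball.
  have hS : IsClosed {y | φ y ≤ ((z + f x - f y : ℝ) : EReal)} :=
    hlsc.isClosed_epigraph.preimage <| continuous_id.prodMk <|
      continuous_coe_real_ereal.comp (continuous_const.sub f.continuous)
  have hsmall : ∀ᶠ i in l, ‖w i - w₀‖ * (‖v‖ + r) < z - (w₀ (v - x) + G v (v - x) + b) := by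
    refine ((tendsto_iff_norm_sub_tendsto_zero.1 hw).mul_const _).eventually_lt_const ?_
    linarith
  have hev : ∀ᶠ i in l, φ (u i) ≤ ((z + f x - f (u i) : ℝ) : EReal) := by
    filter_upwards [hu, hr, hsmall] with i hui hri hi
    have hm := hui.2 v hv
    rw [← hb, ← EReal.coe_add] at hm
    refine hm.trans (EReal.coe_le_coe_iff.2 ?_)
    have hdiff : (w i - w₀) (v - u i) ≤ ‖w i - w₀‖ * (‖v‖ + r) :=
      (Real.le_norm_self _).trans <| (w i - w₀).le_of_opNorm_le_of_le le_rfl <|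
        (norm_sub_le _ _).trans (by linarith)
    simp only [f, add_apply, sub_apply, map_sub] at hdiff hi ⊢
    linarith
  have hxS : φ x ≤ ((z + f x - f x : ℝ) : EReal) :=
    hx _ (convex_setOf_le_sub hbot hconv f (z + f x)) hS hev
  rwa [add_sub_cancel_right] at hxS

end VariationalInequality

theorem upperHemicontinuousAt_SOL {E : Type*} [NormedAddCommGroup E] [NormedSpace ℝ E]
    (hrefl : Function.Surjective (NormedSpace.inclusionInDoubleDual ℝ E))
    {K : Set E} (hKcl : IsClosed K) (hKcv : Convex ℝ K) {G : E → (E →L[ℝ] ℝ)}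
    {φ : E → EReal} (hP1 : condP1 K G) (hP2 : condP2 φ) (hP3 : condP3 K G φ)
    (w₀ : E →L[ℝ] ℝ) :
    UpperHemicontinuousAt (fun w => (toWeakSpace ℝ E).symm ⁻¹' SOL K G φ w) w₀ := by
  obtain ⟨hmono, hhemi⟩ := hP1
  obtain ⟨hbot, -, hconv, hlsc⟩ := hP2
  refine .of_frequently fun t ht hfreq => ?_
  obtain ⟨w, hw, hwt⟩ := exists_seq_forall_of_frequently hfreq
  choose u hu using hwt
  obtain ⟨r, hr⟩ := exists_norm_le_of_mem_SOL hbot hP3 (‖w₀‖ + 1)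
  have hbd : ∀ᶠ n in atTop, u n ∈ (toWeakSpace ℝ E).symm ⁻¹' Metric.closedBall 0 r := by
    filter_upwards [hw.norm.eventually_le_const (lt_add_one _)] with n hn
    exact mem_closedBall_zero_iff.2 (hr _ hn _ (hu n).1)
  obtain ⟨x, -, hx⟩ := (isCompact_toWeakSpace_symm_preimage_closedBall hrefl r).exists_mapClusterPt
    (le_principal_iff.2 hbd)
  have hx_mem : ∀ s, IsClosed s → (∀ᶠ n in atTop, u n ∈ s) → x ∈ s :=
    fun s hs hus => hs.closure_subset (hx.mem_closure_of_mem _ hus)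
  refine ⟨x, mintySOL_subset_SOL hKcv hhemi hbot hconv w₀ ?_, hx_mem t ht (.of_forall (hu · |>.2))⟩
  exact mem_mintySOL_of_tendsto hKcv hKcl hbot hconv hlsc hw
    (.of_forall fun n => SOL_subset_mintySOL hmono _ (hu n).1)
    (hbd.mono fun n hn => mem_closedBall_zero_iff.1 hn)
    fun s hs hsc hus => hx_mem _ (hs.isClosed_toWeakSpace_symm_preimage hsc) hus

theorem U_strongly_weakly_usc_general
    {Ω₁ Ω₂ : Type*} [NormedAddCommGroup Ω₁] [NormedSpace ℝ Ω₁]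
    [NormedAddCommGroup Ω₂] [NormedSpace ℝ Ω₂]
    (hΩ₁refl : Function.Surjective ⇑(NormedSpace.inclusionInDoubleDual ℝ Ω₁))
    (K : Set Ω₁) (hKcl : IsClosed K) (hKcv : Convex ℝ K)
    (G : Ω₁ → (Ω₁ →L[ℝ] ℝ)) (φ : Ω₁ → EReal)
    (hP1 : condP1 K G) (hP2 : condP2 φ) (hP3 : condP3 K G φ)
    {T : ℝ}
    (g : ℝ → Ω₂ → (Ω₁ →L[ℝ] ℝ)) (hP4 : condP4 T g)
    : ∀ ξ₀ ∈ Icc (0:ℝ) T, ∀ θ₀ : Ω₂, ∀ O : Set Ω₁,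
      @IsOpen _ (weakTop Ω₁) O → SOL K G φ (g ξ₀ θ₀) ⊆ O →
      ∃ ε : ℝ, 0 < ε ∧ ∀ ξ ∈ Icc (0:ℝ) T, ∀ θ : Ω₂,
        |ξ - ξ₀| < ε → ‖θ - θ₀‖ < ε → SOL K G φ (g ξ θ) ⊆ O := by
  intro ξ₀ hξ₀ θ₀ O hO hsub
  -- `weakTop Ω₁` is definitionally the topology of `WeakSpace ℝ Ω₁`.
  have hO' : IsOpen ((toWeakSpace ℝ Ω₁).symm ⁻¹' O) := hO
  have hSOL : ∀ᶠ w in 𝓝 (g ξ₀ θ₀), SOL K G φ w ⊆ O := by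
    filter_upwards [(upperHemicontinuousAt_SOL hΩ₁refl hKcl hKcv hP1 hP2 hP3 _).forall_isOpen
      _ hO' (preimage_mono hsub)] with w hw
    exact (toWeakSpace ℝ Ω₁).symm.surjective.preimage_subset_preimage_iff.1 hw
  have hU := (hP4.1 (ξ₀, θ₀) ⟨hξ₀, mem_univ _⟩).tendsto.eventually hSOL
  obtain ⟨ε, hε, hball⟩ := Metric.eventually_nhds_iff.1 (eventually_nhdsWithin_iff.1 hU)
  refine ⟨ε, hε, fun ξ hξ θ hξε hθε => @hball (ξ, θ) ?_ ⟨hξ, mem_univ θ⟩⟩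
  rw [Prod.dist_eq, max_lt_iff, Real.dist_eq, dist_eq_norm]
  exact ⟨hξε, hθε⟩

/-- **Theorem 3.4 (i)**: `U(ξ,θ) := SOL(K, g(ξ,θ) + G(·), φ)` is strongly-weakly upper
semicontinuous on `[0,T] × Ω₂`. -/
theorem U_strongly_weakly_usc
    {Ω₁ Ω₂ : Type*} [NormedAddCommGroup Ω₁] [NormedSpace ℝ Ω₁] [CompleteSpace Ω₁]
    [TopologicalSpace.SeparableSpace Ω₁]
    [NormedAddCommGroup Ω₂] [NormedSpace ℝ Ω₂] [CompleteSpace Ω₂]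
    [TopologicalSpace.SeparableSpace Ω₂]
    (hΩ₁refl : Function.Surjective ⇑(NormedSpace.inclusionInDoubleDual ℝ Ω₁))
    (hΩ₂refl : Function.Surjective ⇑(NormedSpace.inclusionInDoubleDual ℝ Ω₂))
    (K : Set Ω₁) (hKne : K.Nonempty) (hKcl : IsClosed K) (hKcv : Convex ℝ K)
    (G : Ω₁ → (Ω₁ →L[ℝ] ℝ)) (φ : Ω₁ → EReal)
    (hP1 : condP1 K G) (hP2 : condP2 φ) (hP3 : condP3 K G φ)
    {T : ℝ} (hT : 0 < T)
    (g : ℝ → Ω₂ → (Ω₁ →L[ℝ] ℝ)) (hP4 : condP4 T g)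
    : ∀ ξ₀ ∈ Icc (0:ℝ) T, ∀ θ₀ : Ω₂, ∀ O : Set Ω₁,
      @IsOpen _ (weakTop Ω₁) O → SOL K G φ (g ξ₀ θ₀) ⊆ O →
      ∃ ε : ℝ, 0 < ε ∧ ∀ ξ ∈ Icc (0:ℝ) T, ∀ θ : Ω₂,
        |ξ - ξ₀| < ε → ‖θ - θ₀‖ < ε → SOL K G φ (g ξ θ) ⊆ O :=
  U_strongly_weakly_usc_general hΩ₁refl K hKcl hKcv G φ hP1 hP2 hP3 g hP4
end
end

section
/- Under conditions (P1)–(P4), for every bounded subset D of C([0,T],Ω₂) there exists a constant Θ_D > 0 such that sup{‖u‖_{Ω₁} : u ∈ U(ξ,θ(ξ))} ≤ Θ_D for all ξ ∈ [0,T] and all θ ∈ D. -/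
open MeasureTheory Set Filter Topology
open scoped ENNReal

noncomputable section

/-- **Theorem 3.4 (iii)**: for each bounded `D ⊆ C([0,T],Ω₂)` the sets `U(ξ, θ(ξ))`,
`θ ∈ D`, `ξ ∈ [0,T]`, are uniformly bounded. -/
theorem U_uniformly_bounded_on_bounded_sets
    {Ω₁ Ω₂ : Type*} [NormedAddCommGroup Ω₁] [NormedSpace ℝ Ω₁] [CompleteSpace Ω₁]
    [TopologicalSpace.SeparableSpace Ω₁]
    [NormedAddCommGroup Ω₂] [NormedSpace ℝ Ω₂] [CompleteSpace Ω₂]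
    [TopologicalSpace.SeparableSpace Ω₂]
    (hΩ₁refl : Function.Surjective ⇑(NormedSpace.inclusionInDoubleDual ℝ Ω₁))
    (hΩ₂refl : Function.Surjective ⇑(NormedSpace.inclusionInDoubleDual ℝ Ω₂))
    (K : Set Ω₁) (hKne : K.Nonempty) (hKcl : IsClosed K) (hKcv : Convex ℝ K)
    (G : Ω₁ → (Ω₁ →L[ℝ] ℝ)) (φ : Ω₁ → EReal)
    (hP1 : condP1 K G) (hP2 : condP2 φ) (hP3 : condP3 K G φ)
    {T : ℝ} (hT : 0 < T)
    (g : ℝ → Ω₂ → (Ω₁ →L[ℝ] ℝ)) (hP4 : condP4 T g)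
    : ∀ D : Set C(Icc (0:ℝ) T, Ω₂), Bornology.IsBounded D →
      ∃ ΘD : ℝ, 0 < ΘD ∧ ∀ θ ∈ D, ∀ ξ : Icc (0:ℝ) T,
        ∀ u ∈ SOL K G φ (g ξ.1 (θ ξ)), ‖u‖ ≤ ΘD := by
  intro D _
  obtain ⟨C, hC⟩ := hP4.2
  obtain ⟨vs, hvsK, hvsTop, hcoer⟩ := hP3
  obtain ⟨R, hR⟩ := hcoer (C + 1)
  have hC0 : 0 ≤ C := le_trans (norm_nonneg _) (hC 0 ⟨le_refl 0, hT.le⟩ 0)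
  refine ⟨max (max R (C * ‖vs‖)) 1, lt_of_lt_of_le one_pos (le_max_right _ _), ?_⟩
  intro θ hθ ξ u hu
  obtain ⟨huK, hSol⟩ := hu
  set w := g ξ.1 (θ ξ) with hw
  have hwle : ‖w‖ ≤ C := hC ξ.1 ξ.2 (θ ξ)
  set c : ℝ := (φ vs).toReal with hcdef
  have hvs' : φ vs = (c : EReal) := (EReal.coe_toReal hvsTop (hP2.1 vs)).symm
  have hsol := hSol vs hvsK
  rw [hvs'] at hsol
  have hφuTop : φ u ≠ ⊤ := by
    intro h
    rw [h, ← EReal.coe_add] at hsol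
    exact (EReal.coe_lt_top _).not_ge hsol
  set b : ℝ := (φ u).toReal with hbdef
  have hu' : φ u = (b : EReal) := (EReal.coe_toReal hφuTop (hP2.1 u)).symm
  rw [hu', ← EReal.coe_add] at hsol
  have hsolR : b ≤ w (vs - u) + (G u) (vs - u) + c := EReal.coe_le_coe_iff.mp hsol
  by_cases hcase : ‖u‖ ≤ max (max R (C * ‖vs‖)) 1
  · exact hcase
  push_neg at hcase
  have hRle : R ≤ ‖u‖ := le_of_lt (lt_of_le_of_lt (le_trans (le_max_left _ _) (le_max_left _ _)) hcase)
  have hcoerR := hR u huK hRle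
  rw [hvs', hu', ← EReal.coe_add, ← EReal.coe_add] at hcoerR
  have hcoerR' : (C + 1) * ‖u‖ + c ≤ (G u) (u - vs) + b := EReal.coe_le_coe_iff.mp hcoerR
  have hGsum : (G u) (u - vs) + (G u) (vs - u) = 0 := by
    rw [← map_add]
    simp
  have hwbd : w (vs - u) ≤ C * (‖vs‖ + ‖u‖) := by
    calc w (vs - u) ≤ ‖w‖ * ‖vs - u‖ :=
          (le_abs_self _).trans (by simpa using w.le_opNorm (vs - u))
      _ ≤ C * (‖vs‖ + ‖u‖) := by
          apply mul_le_mul hwle (norm_sub_le _ _) (norm_nonneg _) hC0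
  have hmax : C * ‖vs‖ ≤ max (max R (C * ‖vs‖)) 1 := le_trans (le_max_right _ _) (le_max_left _ _)
  linarith
end
end
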